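/- arXiv:2112.03180 — 3 statements merged into one kernel-verified Lean document; each statement's English description precedes it below -/
import Mathlib

section
/- Let (M_n)_{n≥0} be a sequence of positive reals with M_0 = 1 such that limsup_{n→∞} M_n^{1/n} = +∞. Then there exist a log-convex sequence of positive reals (N_n)_{n≥0} with N_0 = 1 (i.e. N_{n+1}/N_n is increasing) and strictly increasing sequences of positive integers i_0 < d_0 < i_1 < d_1 < i_2 < d_2 < ⋯ such that N_{d_n} = M_{d_n} and N_{i_n} = 2^{2^{i_n}} · M_{i_n} for every n ≥ 0. -/
open Filter


noncomputable def targetlog (M : ℕ → ℝ) (b : Bool) (m : ℕ) : ℝ :=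
  if b then Real.log (2 ^ (2 ^ m) * M m) else Real.log (M m)

lemma targetlog_ge (M : ℕ → ℝ) (hMpos : ∀ n, 0 < M n) (b : Bool) (m : ℕ) :
    Real.log (M m) ≤ targetlog M b m := by
  cases b with
  | false => simp [targetlog]
  | true =>
    simp only [targetlog, if_true]
    apply Real.log_le_log (hMpos m)
    have h1 : (1:ℝ) ≤ 2 ^ (2 ^ m) := one_le_pow₀ (by norm_num)
    nlinarith [hMpos m]

lemma targetlog_pos_arg (M : ℕ → ℝ) (hMpos : ∀ n, 0 < M n) (m : ℕ) :
    (0:ℝ) < 2 ^ (2 ^ m) * M m := by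
  have := hMpos m; positivity

lemma key (M : ℕ → ℝ) (hMpos : ∀ n, 0 < M n)
    (hlimsup : ∀ C : ℝ, ∃ᶠ n : ℕ in atTop, C < (M n) ^ ((1 : ℝ) / (n : ℝ)))
    (p : ℕ) (v s : ℝ) :
    ∃ m : ℕ, p < m ∧ v + s * ((m : ℝ) - (p : ℝ)) < Real.log (M m) := by
  obtain ⟨m, hm, hC⟩ := frequently_atTop.mp (hlimsup (Real.exp (|s| + 1)))
      (max (p + 1) (⌈|v|⌉₊ + 1))
  have h1 : p + 1 ≤ m := le_trans (le_max_left _ _) hm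
  have h2 : ⌈|v|⌉₊ + 1 ≤ m := le_trans (le_max_right _ _) hm
  have hm0 : (0:ℝ) < m := by
    have : 0 < m := by omega
    exact_mod_cast this
  have hvm : |v| + 1 ≤ (m:ℝ) := by
    have ha := Nat.le_ceil |v|
    have h2' : ((⌈|v|⌉₊:ℝ) + 1) ≤ m := by exact_mod_cast h2
    linarith
  have hlog : (m:ℝ) * (|s| + 1) < Real.log (M m) := by
    have hlt := Real.log_lt_log (Real.exp_pos _) hC
    rw [Real.log_exp, Real.log_rpow (hMpos m)] at hlt
    have h3 := mul_lt_mul_of_pos_left hlt hm0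
    rw [show (m:ℝ) * (1 / m * Real.log (M m)) = Real.log (M m) by field_simp] at h3
    exact h3
  have hpm : (p:ℝ) ≤ m := by exact_mod_cast (by omega : p ≤ m)
  have hp0 : (0:ℝ) ≤ (p:ℝ) := Nat.cast_nonneg p
  have hs1 : s * ((m:ℝ) - p) ≤ |s| * ((m:ℝ) - p) :=
    mul_le_mul_of_nonneg_right (le_abs_self s) (by linarith)
  have hs2 : |s| * ((m:ℝ) - p) ≤ |s| * m :=
    mul_le_mul_of_nonneg_left (by linarith) (abs_nonneg s)
  refine ⟨m, by omega, ?_⟩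
  have hv := le_abs_self v
  nlinarith [hlog, hvm, hs1, hs2, hv]

lemma anchors (M : ℕ → ℝ) (hMpos : ∀ n, 0 < M n)
    (hlimsup : ∀ C : ℝ, ∃ᶠ n : ℕ in atTop, C < (M n) ^ ((1 : ℝ) / (n : ℝ))) :
    ∃ (P : ℕ → ℕ) (V S : ℕ → ℝ),
      P 0 = 0 ∧ V 0 = 0 ∧ (∀ k, P k < P (k + 1)) ∧
      (∀ k, V (k + 1) = V k + S k * ((P (k + 1) : ℝ) - (P k : ℝ))) ∧
      (∀ k, S k < S (k + 1)) ∧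
      (∀ k, V (k + 1) = targetlog M (decide (k % 2 = 0)) (P (k + 1))) := by
  choose F hF1 hF2 using key M hMpos hlimsup
  obtain ⟨A, hA0, hAstep⟩ :
      ∃ A : ℕ → ℕ × ℝ × ℝ, A 0 = (0, 0, 0) ∧
        ∀ k, A (k + 1) =
          (F (A k).1 (A k).2.1 (A k).2.2,
           targetlog M (decide (k % 2 = 0)) (F (A k).1 (A k).2.1 (A k).2.2),
           (targetlog M (decide (k % 2 = 0)) (F (A k).1 (A k).2.1 (A k).2.2) - (A k).2.1) /
             ((F (A k).1 (A k).2.1 (A k).2.2 : ℝ) - ((A k).1 : ℝ))) :=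
    ⟨fun k => Nat.rec ((0 : ℕ), (0 : ℝ), (0 : ℝ)) (fun k prev =>
       (F prev.1 prev.2.1 prev.2.2,
        targetlog M (decide (k % 2 = 0)) (F prev.1 prev.2.1 prev.2.2),
        (targetlog M (decide (k % 2 = 0)) (F prev.1 prev.2.1 prev.2.2) - prev.2.1) /
          ((F prev.1 prev.2.1 prev.2.2 : ℝ) - (prev.1 : ℝ)))) k,
     rfl, fun k => rfl⟩
  refine ⟨fun k => (A k).1, fun k => (A k).2.1, fun k => (A (k + 1)).2.2,
    by show (A 0).1 = 0; rw [hA0], by show (A 0).2.1 = 0; rw [hA0], ?_, ?_, ?_, ?_⟩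
  · intro k
    show (A k).1 < (A (k + 1)).1
    have := hF1 (A k).1 (A k).2.1 (A k).2.2
    rw [hAstep k]
    exact this
  · intro k
    have hlt : ((A k).1 : ℝ) < ((A (k + 1)).1 : ℝ) := by
      have := hF1 (A k).1 (A k).2.1 (A k).2.2
      rw [hAstep k]; exact_mod_cast this
    have hne : ((A (k + 1)).1 : ℝ) - ((A k).1 : ℝ) ≠ 0 := by linarith
    have hS : (A (k + 1)).2.2 =
        ((A (k + 1)).2.1 - (A k).2.1) / (((A (k + 1)).1 : ℝ) - ((A k).1 : ℝ)) := by
      rw [hAstep k]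
    show (A (k + 1)).2.1 = (A k).2.1 + (A (k + 1)).2.2 * (((A (k + 1)).1 : ℝ) - ((A k).1 : ℝ))
    rw [hS, div_mul_cancel₀ _ hne]
    ring
  · intro k
    show (A (k + 1)).2.2 < (A (k + 2)).2.2
    have hlt : ((A (k + 1)).1 : ℝ) < ((A (k + 2)).1 : ℝ) := by
      have := hF1 (A (k + 1)).1 (A (k + 1)).2.1 (A (k + 1)).2.2
      rw [hAstep (k + 1)]; exact_mod_cast this
    have hΔ : (0:ℝ) < ((A (k + 2)).1 : ℝ) - ((A (k + 1)).1 : ℝ) := by linarith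
    have hkey : (A (k + 1)).2.1 + (A (k + 1)).2.2 * (((A (k + 2)).1 : ℝ) - ((A (k + 1)).1 : ℝ))
        < Real.log (M (A (k + 2)).1) := by
      have := hF2 (A (k + 1)).1 (A (k + 1)).2.1 (A (k + 1)).2.2
      rw [hAstep (k + 1)]; exact this
    have hV2 : Real.log (M (A (k + 2)).1) ≤ (A (k + 2)).2.1 := by
      rw [hAstep (k + 1)]
      exact targetlog_ge M hMpos _ _
    have hS : (A (k + 2)).2.2 =
        ((A (k + 2)).2.1 - (A (k + 1)).2.1) / (((A (k + 2)).1 : ℝ) - ((A (k + 1)).1 : ℝ)) := by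
      rw [hAstep (k + 1)]
    rw [hS, lt_div_iff₀ hΔ]
    nlinarith [hkey, hV2]
  · intro k
    show (A (k + 1)).2.1 = targetlog M (decide (k % 2 = 0)) ((A (k + 1)).1)
    rw [hAstep k]


/-- The inductive construction in the proof of Theorem 2: from a positive sequence `M`
with `M 0 = 1` and `limsup M n ^ (1/n) = +∞` (stated equivalently: `M n ^ (1/n)`
exceeds every constant frequently), one builds a log-convex sequence `N` with `N 0 = 1`
and interlaced sequences of positive integers `i 0 < d 0 < i 1 < d 1 < ⋯` with
`N (d n) = M (d n)` and `N (i n) = 2^(2^(i n)) * M (i n)` for all `n`. -/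
theorem exists_logconvex_interpolating_sequence
    (M : ℕ → ℝ) (hMpos : ∀ n, 0 < M n) (hM0 : M 0 = 1)
    (hlimsup : ∀ C : ℝ, ∃ᶠ n : ℕ in atTop, C < (M n) ^ ((1 : ℝ) / (n : ℝ))) :
    ∃ (N : ℕ → ℝ) (i d : ℕ → ℕ),
      (∀ n, 0 < N n) ∧ N 0 = 1 ∧
      (∀ n : ℕ, 1 ≤ n → (N n) ^ 2 ≤ N (n - 1) * N (n + 1)) ∧
      (∀ n, 0 < i n) ∧
      (∀ n, i n < d n) ∧ (∀ n, d n < i (n + 1)) ∧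
      (∀ n, N (d n) = M (d n)) ∧
      (∀ n, N (i n) = 2 ^ (2 ^ (i n)) * M (i n)) := by
  obtain ⟨P, V, S, hP0, hV0, hPlt, hVrec, hSlt, hVtar⟩ := anchors M hMpos hlimsup
  have hPmono : StrictMono P := strictMono_nat_of_lt_succ hPlt
  have hSmono : Monotone S := (strictMono_nat_of_lt_succ hSlt).monotone
  have hPge : ∀ k, k ≤ P k := by
    intro k
    induction k with
    | zero => exact Nat.zero_le _
    | succ k ih => exact Nat.succ_le_of_lt (lt_of_le_of_lt ih (hPlt k))
  set kk : ℕ → ℕ := fun n => Nat.findGreatest (fun k => P k ≤ n) n with hkk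
  have hkkP : ∀ n, P (kk n) ≤ n := by
    intro n
    have := Nat.findGreatest_spec (P := fun k => P k ≤ n) (Nat.zero_le n) (by simp [hP0])
    simpa using this
  have hkk_eq : ∀ j n, P j ≤ n → n < P (j + 1) → kk n = j := by
    intro j n h1 h2
    have hj : j ≤ kk n := Nat.le_findGreatest (le_trans (hPge j) h1) h1
    have hj2 : kk n ≤ j := by
      by_contra h
      push_neg at h
      have h3 : P (j + 1) ≤ P (kk n) := hPmono.monotone (by omega)
      have := hkkP n
      omega
    omega
  have hkk_lt : ∀ n, n < P (kk n + 1) := by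
    intro n
    by_contra h
    push_neg at h
    have hle : kk n + 1 ≤ n := le_trans (hPge _) h
    exact Nat.findGreatest_is_greatest (Nat.lt_succ_self _) hle h
  have hkkmono : ∀ n, kk n ≤ kk (n + 1) := by
    intro n
    exact Nat.le_findGreatest (le_trans (Nat.findGreatest_le n) (Nat.le_succ n))
      (le_trans (hkkP n) (Nat.le_succ n))
  have hkkanchor : ∀ k, kk (P k) = k := fun k =>
    hkk_eq k (P k) le_rfl (hPlt k)
  set f : ℕ → ℝ := fun n => V (kk n) + S (kk n) * ((n : ℝ) - (P (kk n) : ℝ)) with hf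
  have hfanchor : ∀ k, f (P k) = V k := by
    intro k
    simp only [hf, hkkanchor k, sub_self, mul_zero, add_zero]
  have hfsucc : ∀ n, f (n + 1) = V (kk n) + S (kk n) * (((n : ℝ) + 1) - (P (kk n) : ℝ)) := by
    intro n
    rcases Nat.lt_or_ge (n + 1) (P (kk n + 1)) with h | h
    · have he : kk (n + 1) = kk n := hkk_eq (kk n) (n + 1) (le_trans (hkkP n) (Nat.le_succ n)) h
      simp only [hf, he]
      push_cast
      ring
    · have heq : P (kk n + 1) = n + 1 := le_antisymm h (hkk_lt n)
      have he : kk (n + 1) = kk n + 1 := by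
        apply hkk_eq
        · rw [heq]
        · rw [← heq]; exact hPlt _
      simp only [hf, he]
      rw [hVrec (kk n), heq]
      push_cast
      ring
  have hfdiff : ∀ n, f (n + 1) - f n = S (kk n) := by
    intro n
    rw [hfsucc n]
    simp only [hf]
    ring
  refine ⟨fun n => Real.exp (f n), fun n => P (2 * n + 1), fun n => P (2 * n + 2),
    fun n => Real.exp_pos _, ?_, ?_, ?_, ?_, ?_, ?_, ?_⟩
  · -- N 0 = 1
    have h0 : kk 0 = 0 := hkk_eq 0 0 (le_of_eq hP0) (by have := hPlt 0; omega)
    show Real.exp (f 0) = 1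
    simp only [hf, h0, hV0, hP0]
    norm_num
  · -- log-convexity
    intro n hn
    obtain ⟨m, rfl⟩ : ∃ m, n = m + 1 := ⟨n - 1, by omega⟩
    show Real.exp (f (m + 1)) ^ 2 ≤ Real.exp (f (m + 1 - 1)) * Real.exp (f (m + 1 + 1))
    have hsub : m + 1 - 1 = m := rfl
    rw [hsub, sq, ← Real.exp_add, ← Real.exp_add, Real.exp_le_exp]
    have h1 := hfdiff m
    have h2 := hfdiff (m + 1)
    have h3 := hSmono (hkkmono m)
    linarith
  · intro n
    show 0 < P (2 * n + 1)
    have := hPge (2 * n + 1)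
    omega
  · intro n
    exact hPmono (by omega)
  · intro n
    exact hPmono (by omega)
  · -- N (d n) = M (d n)
    intro n
    show Real.exp (f (P (2 * n + 2))) = M (P (2 * n + 2))
    rw [hfanchor]
    have hpar : ((2 * n + 1) % 2 : ℕ) = 1 := by omega
    have := hVtar (2 * n + 1)
    rw [hpar] at this
    norm_num [targetlog] at this
    rw [this, Real.exp_log (hMpos _)]
  · -- N (i n) = 2^(2^(i n)) * M (i n)
    intro n
    show Real.exp (f (P (2 * n + 1))) = 2 ^ (2 ^ (P (2 * n + 1))) * M (P (2 * n + 1))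
    rw [hfanchor]
    have hpar : ((2 * n) % 2 : ℕ) = 0 := by omega
    have := hVtar (2 * n)
    rw [hpar] at this
    norm_num [targetlog] at this
    rw [this, Real.exp_log]
    have := hMpos (P (2 * n + 1))
    positivity
end

section
/- Let (M_n)_{n≥0} be a sequence of positive reals with M_0 = 1 and M_1 ≥ 1 which is log-convex (M_n^2 ≤ M_{n-1} M_{n+1} for all n ≥ 1), and assume there exists m_0 ≥ 0 such that M_j ≤ M_k^{j/k} · M_i^{j/i} for all integers i, j, k with i, k > m_0, i < j and j/i < k. Let c_0 be an integer with c_0 > m_0, and let d, D, ℓ be integers with m_0 < d < ℓ < D and D/d < c_0. Define 1/p = (D − ℓ)/(D − d) and 1/q = (ℓ − d)/(D − d). Then M_d^{1/p} · M_D^{1/q} ≤ M_ℓ · M_{c_0}^{ℓ/c_0}. -/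
lemma logdiv_mono (M : ℕ → ℝ) (hMpos : ∀ n, 0 < M n) (hM0 : M 0 = 1) (hM1 : 1 ≤ M 1)
    (hlogconv : ∀ n : ℕ, 1 ≤ n → (M n) ^ 2 ≤ M (n - 1) * M (n + 1)) :
    Monotone (fun n : ℕ => Real.log (M n) / n) := by
  set a : ℕ → ℝ := fun n => Real.log (M n) with ha
  have hconv : ∀ n : ℕ, 2 * a (n+1) ≤ a n + a (n+2) := by
    intro n
    have h := hlogconv (n+1) (by omega)
    have hlog := Real.log_le_log (pow_pos (hMpos _) 2) h
    rw [Real.log_pow, Real.log_mul (hMpos _).ne' (hMpos _).ne'] at hlog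
    simpa [ha] using hlog
  have ha0 : a 0 = 0 := by simp [ha, hM0]
  have claim : ∀ n : ℕ, ((n:ℝ)+1) * a n ≤ (n:ℝ) * a (n+1) := by
    intro n
    induction n with
    | zero => simp [ha0]
    | succ k ih =>
      have h := hconv k
      push_cast
      nlinarith [ih, h]
  apply monotone_nat_of_le_succ
  intro n
  match n with
  | 0 =>
    simp only [Nat.cast_zero, div_zero, ha0, zero_div]
    have : 0 ≤ a 1 := Real.log_nonneg hM1
    positivity
  | (k+1) =>
    have hk : (0:ℝ) < (k:ℝ)+1 := by positivity
    have hk2 : (0:ℝ) < (k:ℝ)+2 := by positivity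
    rw [div_le_div_iff₀ (by push_cast; linarith) (by push_cast; linarith)]
    have := claim (k+1)
    push_cast at this ⊢
    nlinarith [this]

/-- Estimate (2.5) of the paper: under log-convexity and the interpolation
condition (A), for `m₀ < d < ℓ < D` with `D/d < c₀`, setting
`1/p = (D - ℓ)/(D - d)` and `1/q = (ℓ - d)/(D - d)`, one has
`M d ^ (1/p) * M D ^ (1/q) ≤ M ℓ * M c₀ ^ (ℓ/c₀)`. -/
theorem interpolation_estimate
    (M : ℕ → ℝ) (hMpos : ∀ n, 0 < M n) (hM0 : M 0 = 1) (hM1 : 1 ≤ M 1)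
    (hlogconv : ∀ n : ℕ, 1 ≤ n → (M n) ^ 2 ≤ M (n - 1) * M (n + 1))
    (m₀ : ℝ) (hm₀ : 0 ≤ m₀)
    (hA : ∀ i j k : ℕ, m₀ < (i : ℝ) → m₀ < (k : ℝ) → i < j → (j : ℝ) / (i : ℝ) < (k : ℝ) →
      M j ≤ (M k) ^ ((j : ℝ) / (k : ℝ)) * (M i) ^ ((j : ℝ) / (i : ℝ)))
    (c₀ : ℕ) (hc₀ : m₀ < (c₀ : ℝ))
    (d D l : ℕ) (hd : m₀ < (d : ℝ)) (hdl : d < l) (hlD : l < D)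
    (hDd : (D : ℝ) / (d : ℝ) < (c₀ : ℝ))
    (p q : ℝ)
    (hp : 1 / p = ((D : ℝ) - (l : ℝ)) / ((D : ℝ) - (d : ℝ)))
    (hq : 1 / q = ((l : ℝ) - (d : ℝ)) / ((D : ℝ) - (d : ℝ))) :
    (M d) ^ (1 / p) * (M D) ^ (1 / q) ≤ M l * (M c₀) ^ ((l : ℝ) / (c₀ : ℝ)) := by
  have hmono := logdiv_mono M hMpos hM0 hM1 hlogconv
  have hdpos : (0:ℝ) < (d:ℝ) := lt_of_le_of_lt hm₀ hd
  have hd1 : 1 ≤ d := by exact_mod_cast Nat.one_le_iff_ne_zero.mpr (by rintro rfl; simp at hdpos)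
  have hc₀pos : (0:ℝ) < (c₀:ℝ) := lt_of_le_of_lt hm₀ hc₀
  have hc₀1 : 1 ≤ c₀ := Nat.one_le_iff_ne_zero.mpr (by rintro rfl; simp at hc₀pos)
  have hlpos : (0:ℝ) < (l:ℝ) := by
    have h' : (d:ℝ) < l := by exact_mod_cast hdl
    linarith
  have hDl : (l:ℝ) < D := by exact_mod_cast hlD
  have hdl' : (d:ℝ) < l := by exact_mod_cast hdl
  have hDpos : (0:ℝ) < (D:ℝ) := by linarith
  have hDd' : (0:ℝ) < (D:ℝ) - d := by linarith
  -- M c₀ ≥ 1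
  have hMc₀ : 1 ≤ M c₀ := by
    have h01 := hmono hc₀1
    simp only [Nat.cast_one, div_one] at h01
    have h1 : 0 ≤ Real.log (M 1) := Real.log_nonneg hM1
    have : 0 ≤ Real.log (M c₀) := by
      have := h01
      have hc : 0 ≤ Real.log (M c₀) / c₀ := le_trans h1 this
      rwa [le_div_iff₀ hc₀pos, zero_mul] at hc
    calc (1:ℝ) = Real.exp 0 := by simp
    _ ≤ Real.exp (Real.log (M c₀)) := Real.exp_le_exp.mpr this
    _ = M c₀ := Real.exp_log (hMpos _)
  -- M d ^ (l/d) ≤ M l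
  have hMdl : (M d) ^ ((l:ℝ)/(d:ℝ)) ≤ M l := by
    have h := hmono hdl.le
    rw [div_le_div_iff₀ hdpos hlpos] at h
    rw [Real.rpow_def_of_pos (hMpos d), ← Real.exp_log (hMpos l)]
    apply Real.exp_le_exp.mpr
    rw [← mul_div_assoc, div_le_iff₀ hdpos]
    linarith [h]
  -- condition (A)
  have hAdD := hA d D c₀ hd hc₀ (hdl.trans hlD) hDd
  -- exponents
  have hq0 : 0 ≤ 1/q := by rw [hq]; exact div_nonneg (by linarith) (by linarith)
  have hexp1 : 1/p + (D:ℝ)/(d:ℝ) * (1/q) = (l:ℝ)/(d:ℝ) := by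
    rw [hp, hq]; field_simp; ring
  have hexp2 : (D:ℝ)/(c₀:ℝ) * (1/q) ≤ (l:ℝ)/(c₀:ℝ) := by
    rw [hq, div_mul_div_comm, div_le_div_iff₀ (by positivity) hc₀pos]
    nlinarith [mul_nonneg (mul_nonneg hc₀pos.le hdpos.le) (sub_nonneg.mpr hDl.le)]
  calc (M d) ^ (1/p) * (M D) ^ (1/q)
      ≤ (M d) ^ (1/p) * ((M c₀) ^ ((D:ℝ)/(c₀:ℝ)) * (M d) ^ ((D:ℝ)/(d:ℝ))) ^ (1/q) := by
        apply mul_le_mul_of_nonneg_left _ (Real.rpow_nonneg (hMpos d).le _)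
        exact Real.rpow_le_rpow (hMpos D).le hAdD hq0
    _ = (M c₀) ^ ((D:ℝ)/(c₀:ℝ) * (1/q)) * (M d) ^ (1/p + (D:ℝ)/(d:ℝ) * (1/q)) := by
        rw [Real.mul_rpow (Real.rpow_nonneg (hMpos _).le _) (Real.rpow_nonneg (hMpos _).le _),
          ← Real.rpow_mul (hMpos c₀).le, ← Real.rpow_mul (hMpos d).le,
          mul_comm ((M c₀) ^ ((D:ℝ)/(c₀:ℝ) * (1/q))), ← mul_assoc,
          ← Real.rpow_add (hMpos d), mul_comm]
    _ ≤ (M c₀) ^ ((l:ℝ)/(c₀:ℝ)) * M l := by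
        apply mul_le_mul _ _ (Real.rpow_nonneg (hMpos _).le _) (Real.rpow_nonneg (hMpos _).le _)
        · exact Real.rpow_le_rpow_of_exponent_le hMc₀ hexp2
        · rw [hexp1]; exact hMdl
    _ = M l * (M c₀) ^ ((l:ℝ)/(c₀:ℝ)) := mul_comm _ _
end

section
/- Define M_0 = M_1 = 1 and M_n = (n · log n)^n for integers n ≥ 2. Then for all integers i, j, k with i > e^2, k > e^2, i < j and j/i < k, one has M_j ≤ M_k^{j/k} · M_i^{j/i}; equivalently, j · log j ≤ (k · log k) · (i · log i). -/
/-- **Example (ii).** The quasi-analytic sequence `M 0 = M 1 = 1`,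
`M n = (n log n)^n` for `n ≥ 2` satisfies the interpolation condition (1.4)
with `m₀ = e²`. -/
theorem quasianalytic_sequence_interpolation
    (M : ℕ → ℝ) (hM0 : M 0 = 1) (hM1 : M 1 = 1)
    (hM : ∀ n : ℕ, 2 ≤ n → M n = ((n : ℝ) * Real.log (n : ℝ)) ^ n) :
    ∀ i j k : ℕ, Real.exp 2 < (i : ℝ) → Real.exp 2 < (k : ℝ) → i < j →
      (j : ℝ) / (i : ℝ) < (k : ℝ) →
      M j ≤ (M k) ^ ((j : ℝ) / (k : ℝ)) * (M i) ^ ((j : ℝ) / (i : ℝ)) := by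
  intro i j k hi hk hij hjik
  have h1e : (1 : ℝ) < Real.exp 2 := by
    have := Real.exp_lt_exp.mpr (show (0:ℝ) < 2 by norm_num)
    simpa using this
  have hi1 : (1 : ℝ) < (i : ℝ) := h1e.trans hi
  have hk1 : (1 : ℝ) < (k : ℝ) := h1e.trans hk
  have hipos : (0 : ℝ) < i := by linarith
  have hkpos : (0 : ℝ) < k := by linarith
  have hj1 : (1 : ℝ) < (j : ℝ) := hi1.trans (by exact_mod_cast hij)
  have hjpos : (0 : ℝ) < j := by linarith
  have hi2 : 2 ≤ i := by exact_mod_cast Nat.one_lt_cast.mp hi1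
  have hk2 : 2 ≤ k := by exact_mod_cast Nat.one_lt_cast.mp hk1
  have hj2 : 2 ≤ j := by exact_mod_cast Nat.one_lt_cast.mp hj1
  have hli : (2 : ℝ) < Real.log i := (Real.lt_log_iff_exp_lt hipos).mpr hi
  have hlk : (2 : ℝ) < Real.log k := (Real.lt_log_iff_exp_lt hkpos).mpr hk
  have hlj : (0 : ℝ) < Real.log j := Real.log_pos hj1
  -- key inequality: j log j ≤ (k log k)(i log i)
  have hjik' : (j : ℝ) < i * k := (div_lt_iff₀ hipos).mp hjik |>.trans_eq (mul_comm _ _)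
  have hlj2 : Real.log j ≤ Real.log i + Real.log k := by
    have := Real.log_le_log hjpos hjik'.le
    rwa [Real.log_mul (ne_of_gt hipos) (ne_of_gt hkpos)] at this
  have key : (j : ℝ) * Real.log j ≤ ((k : ℝ) * Real.log k) * ((i : ℝ) * Real.log i) := by
    have h1 : Real.log i + Real.log k ≤ Real.log i * Real.log k := by nlinarith
    have h2 : (j : ℝ) * Real.log j ≤ ((i : ℝ) * (k : ℝ)) * (Real.log i * Real.log k) := by
      apply mul_le_mul hjik'.le (hlj2.trans h1) hlj.le (by positivity)
    nlinarith
  have hbi : (0 : ℝ) < (i : ℝ) * Real.log i := by nlinarith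
  have hbk : (0 : ℝ) < (k : ℝ) * Real.log k := by nlinarith
  have hbj : (0 : ℝ) ≤ (j : ℝ) * Real.log j := by positivity
  rw [hM i hi2, hM j hj2, hM k hk2]
  have ek : ((((k : ℝ) * Real.log k) ^ k : ℝ)) ^ ((j : ℝ) / k)
      = ((k : ℝ) * Real.log k) ^ (j : ℝ) := by
    rw [← Real.rpow_natCast ((k : ℝ) * Real.log k) k, ← Real.rpow_mul hbk.le]
    congr 1
    field_simp
  have ei : ((((i : ℝ) * Real.log i) ^ i : ℝ)) ^ ((j : ℝ) / i)
      = ((i : ℝ) * Real.log i) ^ (j : ℝ) := by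
    rw [← Real.rpow_natCast ((i : ℝ) * Real.log i) i, ← Real.rpow_mul hbi.le]
    congr 1
    field_simp
  rw [ek, ei, ← Real.mul_rpow hbk.le hbi.le]
  calc ((j : ℝ) * Real.log j) ^ j = ((j : ℝ) * Real.log j) ^ (j : ℝ) :=
        (Real.rpow_natCast _ _).symm
    _ ≤ (((k : ℝ) * Real.log k) * ((i : ℝ) * Real.log i)) ^ (j : ℝ) :=
        Real.rpow_le_rpow hbj key hjpos.le
end
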